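/- Let $m$ be a positive integer, $K \ge 0$, $\gamma = m^2 + K$, $T > 0$, $u_m(x,t) = m\sin(mx)\,e^{-\gamma t}\,\frac{e^{2\gamma t}-1}{2\gamma}$ and $F_m(x,t) = -\cos(mx)e^{\gamma t}$. Then $\left(\int_{-\pi}^{\pi} u_m(x,T)^2\,dx\right) \cdot \left(\int_0^T \int_{-\pi}^{\pi} F_m(x,t)^2\,dx\,dt\right)^{-1} = \frac{m^2}{2\gamma}\,(1 - e^{-2\gamma T})$. -/

import Mathlib

/-!
Both integrals separate. In space, `sin (m x) ^ 2` and `cos (m x) ^ 2` each integrate to `π` over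
a full period. In time, `∫₀ᵀ e^{2γt} dt` is exactly the factor `c = (e^{2γT} - 1) / (2γ)` of
`u_m(·, T)`, so the ratio is `m² e^{-2γT} c² / c = m² e^{-2γT} c`.
-/

open Real intervalIntegral

theorem integral_exp_mul {c : ℝ} (hc : c ≠ 0) (a b : ℝ) :
    ∫ x in a..b, exp (c * x) = (exp (c * b) - exp (c * a)) / c := by
  rw [integral_comp_mul_left exp hc, integral_exp, smul_eq_mul, inv_mul_eq_div]

theorem sin_intCast_mul_neg_pi (n : ℤ) : sin (n * -π) = 0 := by
  rw [mul_neg, sin_neg, sin_int_mul_pi, neg_zero]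

theorem integral_sin_intCast_mul_sq {n : ℤ} (hn : n ≠ 0) :
    ∫ x in (-π)..π, sin (n * x) ^ 2 = π := by
  have hn' : (n : ℝ) ≠ 0 := Int.cast_ne_zero.mpr hn
  rw [integral_comp_mul_left (fun y => sin y ^ 2) hn', integral_sin_sq, sin_int_mul_pi,
    sin_intCast_mul_neg_pi, smul_eq_mul]
  field_simp
  ring

theorem integral_cos_intCast_mul_sq {n : ℤ} (hn : n ≠ 0) :
    ∫ x in (-π)..π, cos (n * x) ^ 2 = π := by
  have hn' : (n : ℝ) ≠ 0 := Int.cast_ne_zero.mpr hn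
  rw [integral_comp_mul_left (fun y => cos y ^ 2) hn', integral_cos_sq, sin_int_mul_pi,
    sin_intCast_mul_neg_pi, smul_eq_mul]
  field_simp
  ring

theorem stmt_3_general (m : ℕ) (hm : 0 < m) (K : ℝ) (hK : 0 ≤ K)
    (γ : ℝ) (hγ : γ = (m : ℝ) ^ 2 + K) (T : ℝ)
    (u F : ℝ → ℝ → ℝ)
    (hu : ∀ x t, u x t =
      (m : ℝ) * Real.sin ((m : ℝ) * x) * Real.exp (-γ * t) *
        ((Real.exp (2 * γ * t) - 1) / (2 * γ)))
    (hF : ∀ x t, F x t = -Real.cos ((m : ℝ) * x) * Real.exp (γ * t)) :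
    (∫ x in (-Real.pi)..Real.pi, (u x T) ^ 2) *
        (∫ t in (0:ℝ)..T, ∫ x in (-Real.pi)..Real.pi, (F x t) ^ 2)⁻¹
      = (m : ℝ) ^ 2 / (2 * γ) * (1 - Real.exp (-2 * γ * T)) := by
  have hm' : ((m : ℤ) : ℝ) = m := Int.cast_natCast m
  have hmz : (m : ℤ) ≠ 0 := by exact_mod_cast hm.ne'
  have h2γ : 2 * γ ≠ 0 := by rw [hγ]; positivity
  set c := (exp (2 * γ * T) - 1) / (2 * γ) with hc
  have hu_sq : ∫ x in (-π)..π, u x T ^ 2 = (m * exp (-γ * T) * c) ^ 2 * π := by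
    have hu_T (x : ℝ) : u x T ^ 2 = (m * exp (-γ * T) * c) ^ 2 * sin (m * x) ^ 2 := by
      rw [hu, hc]; ring
    simp_rw [hu_T, integral_const_mul]
    rw [← hm', integral_sin_intCast_mul_sq hmz]
  have hF_sq : ∫ t in (0:ℝ)..T, ∫ x in (-π)..π, F x t ^ 2 = π * c := by
    have hF_inner (t : ℝ) : ∫ x in (-π)..π, F x t ^ 2 = π * exp (2 * γ * t) := by
      have hF_t (x : ℝ) : F x t ^ 2 = cos (m * x) ^ 2 * exp (2 * γ * t) := by
        rw [hF, neg_mul, neg_sq, mul_pow, ← exp_nat_mul]; ring_nf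
      simp_rw [hF_t, integral_mul_const]
      rw [← hm', integral_cos_intCast_mul_sq hmz]
    simp_rw [hF_inner, integral_const_mul, integral_exp_mul h2γ, mul_zero, exp_zero, hc]
  have hexp : exp (-γ * T) ^ 2 * (exp (2 * γ * T) - 1) = 1 - exp (-2 * γ * T) := by
    rw [← exp_nat_mul, mul_sub, ← exp_add]
    ring_nf
    rw [exp_zero]
  rw [hu_sq, hF_sq]
  calc (m * exp (-γ * T) * c) ^ 2 * π * (π * c)⁻¹
      = m ^ 2 * exp (-γ * T) ^ 2 * (π * π⁻¹) * (c * c * c⁻¹) := by rw [mul_inv]; ring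
    _ = m ^ 2 / (2 * γ) * (1 - exp (-2 * γ * T)) := by
      rw [mul_inv_cancel₀ pi_ne_zero, mul_self_mul_inv, hc, ← hexp]
      ring

/-- the ratio of the squared `L₂(-π,π)`-norm of `u_m(·,T)` to the squared
`L₂((-π,π)×(0,T))`-norm of `F_m` equals `m²/(2γ) (1 - e^{-2γT})`. -/
theorem stmt_3 (m : ℕ) (hm : 0 < m) (K : ℝ) (hK : 0 ≤ K)
    (γ : ℝ) (hγ : γ = (m : ℝ) ^ 2 + K) (T : ℝ) (hT : 0 < T)
    (u F : ℝ → ℝ → ℝ)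
    (hu : ∀ x t, u x t =
      (m : ℝ) * Real.sin ((m : ℝ) * x) * Real.exp (-γ * t) *
        ((Real.exp (2 * γ * t) - 1) / (2 * γ)))
    (hF : ∀ x t, F x t = -Real.cos ((m : ℝ) * x) * Real.exp (γ * t)) :
    (∫ x in (-Real.pi)..Real.pi, (u x T) ^ 2) *
        (∫ t in (0:ℝ)..T, ∫ x in (-Real.pi)..Real.pi, (F x t) ^ 2)⁻¹
      = (m : ℝ) ^ 2 / (2 * γ) * (1 - Real.exp (-2 * γ * T)) :=
  stmt_3_general m hm K hK γ hγ T u F hu hF
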